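/- Let ρ₀ be a positive semidefinite matrix on ℂ^D with support projector P and L = Σ_x √λ_x (|x⟩⟨x|)ᵀ + c(I−P)ᵀ built from its spectral decomposition ρ₀ = Σ_x λ_x|x⟩⟨x| (λ_x > 0, c ≠ 0). Let 0 < ε < 1 and let ρ_V be a positive semidefinite matrix with (1−ε)ρ₀ ≤ ρ_V ≤ (1+ε)ρ₀ (Loewner order), where ρ_V = Σ_{φ∈W} p_φ M_φ is a convex combination of positive semidefinite matrices M_φ with weights p_φ summing to 1. Define p_res = ε/(1+ε) and τ_res = ((1+ε)/ε)Pᵀ − (1/ε)(L^{-1})† ρ_Vᵀ L^{-1}. Then: (i) τ_res ≥ 0; (ii) 0 ≤ p_res τ_res ≤ (2ε/(1+ε)) Pᵀ; and (iii) Σ_{φ∈W} (1−p_res) p_φ (L^{-1})† M_φᵀ L^{-1} + p_res τ_res = Pᵀ, so that these operators form a positive operator-valued measure on the range of Pᵀ. -/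

import Mathlib

open Matrix MeasureTheory
open scoped Kronecker ComplexOrder

noncomputable section

/-- The positive semidefinite square root of a matrix (junk value `0` if not PSD). -/
def matSqrt {ι : Type*} [Fintype ι] [DecidableEq ι] (A : Matrix ι ι ℂ) : Matrix ι ι ℂ :=
  open Classical in if h : A.PosSemidef then
    (h.1.eigenvectorUnitary : Matrix ι ι ℂ) * diagonal (((↑) : ℝ → ℂ) ∘ (√·) ∘ h.1.eigenvalues) *
      (star h.1.eigenvectorUnitary : Matrix ι ι ℂ) else 0

/-- The matrix absolute value `|X| = √(XᴴX)`. -/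
def matAbs {ι : Type*} [Fintype ι] [DecidableEq ι] (X : Matrix ι ι ℂ) : Matrix ι ι ℂ :=
  matSqrt (Xᴴ * X)

/-- Uhlmann fidelity `F(ρ,σ) = (Tr|√ρ√σ|)²`. -/
def fid {ι : Type*} [Fintype ι] [DecidableEq ι] (ρ σ : Matrix ι ι ℂ) : ℝ :=
  ((matAbs (matSqrt ρ * matSqrt σ)).trace).re ^ 2

/-- A density matrix: positive semidefinite with unit trace. -/
def IsDensity {ι : Type*} [Fintype ι] [DecidableEq ι] (ρ : Matrix ι ι ℂ) : Prop :=
  ρ.PosSemidef ∧ ρ.trace = 1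

/-- The rank-one projector `|ψ⟩⟨ψ|`. -/
def ketbra {ι : Type*} (ψ : ι → ℂ) : Matrix ι ι ℂ := Matrix.vecMulVec ψ (star ψ)

/-- The `l`-fold tensor power of a matrix on `ℂ^d`, acting on `(ℂ^d)^{⊗l}`. -/
def tpow {d : ℕ} (M : Matrix (Fin d) (Fin d) ℂ) (l : ℕ) :
    Matrix (Fin l → Fin d) (Fin l → Fin d) ℂ :=
  Matrix.of fun f g => ∏ i, M (f i) (g i)

/-- Loewner order: `A ⪯ B` iff `B - A` is positive semidefinite. -/
def loewnerLE {ι : Type*} [Fintype ι] (A B : Matrix ι ι ℂ) : Prop := (B - A).PosSemidef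

/-- Projector onto the symmetric subspace of `(ℂ^d)^{⊗l}`:
`(1/l!) Σ_{π ∈ S_l} U_π` where `U_π` permutes the tensor factors. -/
def symProj (d l : ℕ) : Matrix (Fin l → Fin d) (Fin l → Fin d) ℂ :=
  (l.factorial : ℂ)⁻¹ •
    ∑ π : Equiv.Perm (Fin l), Matrix.of fun f g => if f = (fun i => g (π i)) then (1 : ℂ) else 0


/-- Partial trace over the second tensor factor. -/
def ptraceB {D : ℕ} (M : Matrix (Fin D × Fin D) (Fin D × Fin D) ℂ) :
    Matrix (Fin D) (Fin D) ℂ :=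
  Matrix.of fun i j => ∑ k, M (i, k) (j, k)

/-- The maximally entangled vector `(1/√D) Σᵢ |i⟩⊗|i⟩` on `ℂ^D ⊗ ℂ^D`. -/
def maxEnt (D : ℕ) : Fin D × Fin D → ℂ :=
  fun q => if q.1 = q.2 then ((Real.sqrt D : ℝ) : ℂ)⁻¹ else 0

/-!
`L` is the transpose of the matrix acting as `√λₐ` on `xₐ` and as `c` on the orthogonal
complement of the range of `P`; its inverse acts as `1/√λₐ` and `c⁻¹`. Hence the congruence
`A ↦ (L⁻¹)† Aᵀ L⁻¹` preserves the Loewner order and sends `ρ₀` to `Pᵀ`, so the sandwich becomes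
`(1-ε) Pᵀ ≤ σ ≤ (1+ε) Pᵀ` for `σ = (L⁻¹)† ρ_Vᵀ L⁻¹ = Σ_φ p_φ (L⁻¹)† M_φᵀ L⁻¹`. Then
`τ_res = ε⁻¹ ((1+ε) Pᵀ - σ)`, `(2ε/(1+ε)) Pᵀ - p_res τ_res = (1+ε)⁻¹ (σ - (1-ε) Pᵀ)` and
`(1 - p_res) σ + p_res τ_res = Pᵀ` are linear identities.
-/

section Spectral

variable {n κ : Type*}

lemma conjTranspose_ketbra (v : n → ℂ) : (ketbra v)ᴴ = ketbra v := by
  ext i j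
  simp [ketbra, vecMulVec, mul_comm]

lemma transpose_ketbra (v : n → ℂ) : (ketbra v)ᵀ = ketbra (star v) := by
  simp [ketbra]

lemma ketbra_mul_ketbra [Fintype n] [DecidableEq κ] {x : κ → n → ℂ}
    (hx : ∀ a b, star (x a) ⬝ᵥ x b = if a = b then 1 else 0) (a b : κ) :
    ketbra (x a) * ketbra (x b) = if a = b then ketbra (x a) else 0 := by
  ext i j
  have hab : ∑ k, star (x a k) * x b k = if a = b then 1 else 0 := hx a b
  calc (ketbra (x a) * ketbra (x b)) i j
      = x a i * star (x b j) * ∑ k, star (x a k) * x b k := by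
        simp only [ketbra, mul_apply, vecMulVec_apply, Pi.star_apply, Finset.mul_sum]
        exact Finset.sum_congr rfl fun k _ => by ring
    _ = _ := by
        rw [hab]
        split_ifs with h
        · subst h; simp [ketbra, vecMulVec_apply]
        · simp

lemma orthonormal_star {x : κ → n → ℂ} [Fintype n] [DecidableEq κ]
    (hx : ∀ a b, star (x a) ⬝ᵥ x b = if a = b then 1 else 0) (a b : κ) :
    star (star x a) ⬝ᵥ star x b = if a = b then 1 else 0 := by
  rw [Pi.star_apply, Pi.star_apply, star_dotProduct_star, dotProduct_comm, hx]
  split_ifs <;> simp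

variable [Fintype κ]

lemma sum_smul_ketbra_mul_sum_smul_ketbra [Fintype n] [DecidableEq κ] {x : κ → n → ℂ}
    (hx : ∀ a b, star (x a) ⬝ᵥ x b = if a = b then 1 else 0) (f g : κ → ℂ) :
    (∑ a, f a • ketbra (x a)) * (∑ a, g a • ketbra (x a)) = ∑ a, (f a * g a) • ketbra (x a) := by
  simp only [Finset.sum_mul, Finset.mul_sum, Matrix.smul_mul, Matrix.mul_smul,
    ketbra_mul_ketbra hx, smul_ite, smul_zero, Finset.sum_ite_eq', Finset.mem_univ, if_true,
    smul_smul, mul_comm (g _)]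

variable [DecidableEq n]

def spectralMatrix (x : κ → n → ℂ) (f : κ → ℂ) (c : ℂ) : Matrix n n ℂ :=
  ∑ a, f a • ketbra (x a) + c • (1 - ∑ a, ketbra (x a))

lemma spectralMatrix_zero (x : κ → n → ℂ) (f : κ → ℂ) :
    spectralMatrix x f 0 = ∑ a, f a • ketbra (x a) := by
  simp [spectralMatrix]

lemma spectralMatrix_one_one (x : κ → n → ℂ) : spectralMatrix x 1 1 = 1 := by
  simp [spectralMatrix]

lemma conjTranspose_spectralMatrix (x : κ → n → ℂ) (f : κ → ℂ) (c : ℂ) :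
    (spectralMatrix x f c)ᴴ = spectralMatrix x (star f) (star c) := by
  simp [spectralMatrix, conjTranspose_sum, conjTranspose_ketbra]

lemma transpose_spectralMatrix (x : κ → n → ℂ) (f : κ → ℂ) (c : ℂ) :
    (spectralMatrix x f c)ᵀ = spectralMatrix (star x) f c := by
  simp [spectralMatrix, transpose_sum, transpose_ketbra]

lemma spectralMatrix_mul [Fintype n] [DecidableEq κ] {x : κ → n → ℂ}
    (hx : ∀ a b, star (x a) ⬝ᵥ x b = if a = b then 1 else 0) (f g : κ → ℂ) (c d : ℂ) :
    spectralMatrix x f c * spectralMatrix x g d = spectralMatrix x (f * g) (c * d) := by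
  have hS := sum_smul_ketbra_mul_sum_smul_ketbra hx
  have hP : ∑ a, ketbra (x a) = ∑ a, (1 : κ → ℂ) a • ketbra (x a) := by simp
  have hSQ (f : κ → ℂ) : (∑ a, f a • ketbra (x a)) * (1 - ∑ a, ketbra (x a)) = 0 := by
    rw [Matrix.mul_sub, Matrix.mul_one, hP, hS]; simp
  have hQS (f : κ → ℂ) : (1 - ∑ a, ketbra (x a)) * (∑ a, f a • ketbra (x a)) = 0 := by
    rw [Matrix.sub_mul, Matrix.one_mul, hP, hS]; simp
  have hQQ : (1 - ∑ a, ketbra (x a)) * (1 - ∑ a, ketbra (x a)) = 1 - ∑ a, ketbra (x a) := by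
    have hPQ := hSQ 1
    simp only [Pi.one_apply, one_smul] at hPQ
    rw [Matrix.sub_mul, Matrix.one_mul, hPQ, sub_zero]
  simp only [spectralMatrix, Matrix.add_mul, Matrix.mul_add, Matrix.smul_mul, Matrix.mul_smul,
    hS, hSQ, hQS, hQQ, smul_zero, add_zero, zero_add, smul_smul, mul_comm d c]
  rfl

lemma spectralMatrix_inv [Fintype n] [DecidableEq κ] {x : κ → n → ℂ}
    (hx : ∀ a b, star (x a) ⬝ᵥ x b = if a = b then 1 else 0) {f : κ → ℂ} (hf : ∀ a, f a ≠ 0)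
    {c : ℂ} (hc : c ≠ 0) :
    (spectralMatrix x f c)⁻¹ = spectralMatrix x f⁻¹ c⁻¹ := by
  refine inv_eq_left_inv ?_
  rw [spectralMatrix_mul hx, inv_mul_cancel₀ hc, ← spectralMatrix_one_one x]
  congr 1
  ext a
  exact inv_mul_cancel₀ (hf a)

lemma transpose_congr_by_inv_spectralMatrix [Fintype n] [DecidableEq κ] {x : κ → n → ℂ}
    (hx : ∀ a b, star (x a) ⬝ᵥ x b = if a = b then 1 else 0) {f : κ → ℂ} (hf : ∀ a, f a ≠ 0)
    {c : ℂ} (hc : c ≠ 0) (g : κ → ℂ) :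
    (((spectralMatrix x f c)ᵀ)⁻¹)ᴴ * (spectralMatrix x g 0)ᵀ * ((spectralMatrix x f c)ᵀ)⁻¹ =
      (spectralMatrix x (star f⁻¹ * g * f⁻¹) 0)ᵀ := by
  simp only [transpose_spectralMatrix, spectralMatrix_inv (orthonormal_star hx) hf hc,
    conjTranspose_spectralMatrix, spectralMatrix_mul (orthonormal_star hx), mul_zero, zero_mul]

lemma transpose_congr_by_inv_sqrt_spectralMatrix [Fintype n] [DecidableEq κ] {x : κ → n → ℂ}
    (hx : ∀ a b, star (x a) ⬝ᵥ x b = if a = b then 1 else 0) {lam : κ → ℝ}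
    (hlam : ∀ a, 0 < lam a) {c : ℂ} (hc : c ≠ 0) :
    let L := (spectralMatrix x (fun a => ((√(lam a) : ℝ) : ℂ)) c)ᵀ
    (L⁻¹)ᴴ * (spectralMatrix x (fun a => (lam a : ℂ)) 0)ᵀ * L⁻¹ = (spectralMatrix x 1 0)ᵀ := by
  have hsq (a : κ) : ((√(lam a) : ℝ) : ℂ) ≠ 0 :=
    Complex.ofReal_ne_zero.mpr (Real.sqrt_pos.mpr (hlam a)).ne'
  intro L
  rw [transpose_congr_by_inv_spectralMatrix hx hsq hc]
  congr 2
  ext a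
  have hlam_sq : ((√(lam a) : ℝ) : ℂ) * ((√(lam a) : ℝ) : ℂ) = lam a := by
    exact_mod_cast Real.mul_self_sqrt (hlam a).le
  simp only [Pi.mul_apply, Pi.inv_apply, Pi.star_apply, Pi.one_apply, Complex.star_def,
    map_inv₀, Complex.conj_ofReal, ← hlam_sq]
  rw [← mul_assoc, inv_mul_cancel₀ (hsq a), one_mul, mul_inv_cancel₀ (hsq a)]

end Spectral

section Residual

variable {n : Type*}

lemma loewnerLE.conjTranspose_mul_transpose_mul [Fintype n] {m : Type*} [Fintype m]
    {A B : Matrix n n ℂ} (h : loewnerLE A B) (C : Matrix n m ℂ) :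
    loewnerLE (Cᴴ * Aᵀ * C) (Cᴴ * Bᵀ * C) := by
  unfold loewnerLE at h ⊢
  rw [← Matrix.sub_mul, ← Matrix.mul_sub, ← transpose_sub]
  exact h.transpose.conjTranspose_mul_mul_same C

/-- The paper's `τ_res`, for `Q = Pᵀ` and `σ = (L⁻¹)† ρ_Vᵀ L⁻¹`. -/
def povmResidual (ε : ℝ) (Q σ : Matrix n n ℂ) : Matrix n n ℂ :=
  (((1 + ε) / ε : ℝ) : ℂ) • Q - ((ε⁻¹ : ℝ) : ℂ) • σ

variable {Q σ : Matrix n n ℂ} {ε : ℝ}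

lemma posSemidef_povmResidual [Fintype n] (hε : 0 < ε)
    (hσ : loewnerLE σ (((1 + ε : ℝ) : ℂ) • Q)) :
    (povmResidual ε Q σ).PosSemidef := by
  have h : povmResidual ε Q σ = ((ε⁻¹ : ℝ) : ℂ) • ((((1 + ε : ℝ) : ℂ) • Q) - σ) := by
    unfold povmResidual
    match_scalars <;> field_simp
  rw [h]
  exact hσ.smul (Complex.zero_le_real.mpr (by positivity))

lemma smul_povmResidual_loewnerLE [Fintype n] (hε : 0 < ε)
    (hσ : loewnerLE (((1 - ε : ℝ) : ℂ) • Q) σ) :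
    loewnerLE (((ε / (1 + ε) : ℝ) : ℂ) • povmResidual ε Q σ) (((2 * ε / (1 + ε) : ℝ) : ℂ) • Q) := by
  have h : ((2 * ε / (1 + ε) : ℝ) : ℂ) • Q - ((ε / (1 + ε) : ℝ) : ℂ) • povmResidual ε Q σ =
      (((1 + ε)⁻¹ : ℝ) : ℂ) • (σ - ((1 - ε : ℝ) : ℂ) • Q) := by
    unfold povmResidual
    match_scalars
    all_goals field_simp
    ring
  unfold loewnerLE
  rw [h]
  exact hσ.smul (Complex.zero_le_real.mpr (by positivity))

lemma smul_add_smul_povmResidual (hε : 0 < ε) :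
    (((1 - ε / (1 + ε)) : ℝ) : ℂ) • σ + ((ε / (1 + ε) : ℝ) : ℂ) • povmResidual ε Q σ = Q := by
  unfold povmResidual
  match_scalars
  all_goals field_simp
  ring

end Residual

theorem remote_preparation_approximate_povm_general
    (D : ℕ)
    (κ : Type*) [Fintype κ] [DecidableEq κ]
    (x : κ → (Fin D → ℂ)) (hx : ∀ a b, star (x a) ⬝ᵥ x b = (if a = b then (1 : ℂ) else 0))
    (lam : κ → ℝ) (hlam : ∀ a, 0 < lam a)
    (ρ₀ : Matrix (Fin D) (Fin D) ℂ) (hρ₀ : ρ₀ = ∑ a, (lam a : ℂ) • ketbra (x a))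
    (P : Matrix (Fin D) (Fin D) ℂ) (hP : P = ∑ a, ketbra (x a))
    (c : ℂ) (hc : c ≠ 0)
    (L : Matrix (Fin D) (Fin D) ℂ)
    (hL : L = (∑ a, ((Real.sqrt (lam a) : ℝ) : ℂ) • (ketbra (x a))ᵀ) + c • (1 - P)ᵀ)
    (ε : ℝ) (hε0 : 0 < ε)
    -- ρ_V = Σ_φ p_φ M_φ is a convex combination of PSD matrices
    (Φ : Type*) [Fintype Φ]
    (M : Φ → Matrix (Fin D) (Fin D) ℂ)
    (p : Φ → ℝ)
    (ρV : Matrix (Fin D) (Fin D) ℂ) (hρV : ρV = ∑ φ, (p φ : ℂ) • M φ)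
    -- Loewner sandwich (1−ε)ρ₀ ≤ ρ_V ≤ (1+ε)ρ₀
    (hlo : loewnerLE (((1 - ε : ℝ) : ℂ) • ρ₀) ρV)
    (hhi : loewnerLE ρV (((1 + ε : ℝ) : ℂ) • ρ₀))
    -- τ_res = ((1+ε)/ε)Pᵀ − (1/ε)(L⁻¹)† ρ_Vᵀ L⁻¹
    (τres : Matrix (Fin D) (Fin D) ℂ)
    (hτ : τres = (((1 + ε) / ε : ℝ) : ℂ) • Pᵀ -
      ((ε⁻¹ : ℝ) : ℂ) • ((L⁻¹)ᴴ * ρVᵀ * L⁻¹)) :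
    τres.PosSemidef ∧
    (loewnerLE 0 (((ε / (1 + ε) : ℝ) : ℂ) • τres) ∧
      loewnerLE (((ε / (1 + ε) : ℝ) : ℂ) • τres) (((2 * ε / (1 + ε) : ℝ) : ℂ) • Pᵀ)) ∧
    (∑ φ, (((1 - ε / (1 + ε)) * p φ : ℝ) : ℂ) • ((L⁻¹)ᴴ * (M φ)ᵀ * L⁻¹)) +
      (((ε / (1 + ε) : ℝ) : ℂ) • τres) = Pᵀ := by
  have hwhite : (L⁻¹)ᴴ * ρ₀ᵀ * L⁻¹ = Pᵀ := by
    have hL' : L = (spectralMatrix x (fun a => ((√(lam a) : ℝ) : ℂ)) c)ᵀ := by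
      simp only [hL, hP, spectralMatrix, transpose_add, transpose_sum, transpose_smul]
    have hP' : P = spectralMatrix x 1 0 := by simp [hP, spectralMatrix_zero]
    rw [hL', hρ₀, hP', ← spectralMatrix_zero]
    exact transpose_congr_by_inv_sqrt_spectralMatrix hx hlam hc
  have hcongr (r : ℝ) : (L⁻¹)ᴴ * ((r : ℂ) • ρ₀)ᵀ * L⁻¹ = (r : ℂ) • Pᵀ := by
    rw [transpose_smul, Matrix.mul_smul, Matrix.smul_mul, hwhite]
  have hsum : ∑ φ, (((1 - ε / (1 + ε)) * p φ : ℝ) : ℂ) • ((L⁻¹)ᴴ * (M φ)ᵀ * L⁻¹) =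
      (((1 - ε / (1 + ε)) : ℝ) : ℂ) • ((L⁻¹)ᴴ * ρVᵀ * L⁻¹) := by
    simp only [hρV, transpose_sum, transpose_smul, Matrix.mul_sum, Finset.sum_mul,
      Matrix.mul_smul, Matrix.smul_mul, Finset.smul_sum, smul_smul, Complex.ofReal_mul]
  have hσlo := hlo.conjTranspose_mul_transpose_mul L⁻¹
  have hσhi := hhi.conjTranspose_mul_transpose_mul L⁻¹
  rw [hcongr] at hσlo hσhi
  subst hτ
  have hτ_psd := posSemidef_povmResidual hε0 hσhi
  refine ⟨hτ_psd, ⟨?_, smul_povmResidual_loewnerLE hε0 hσlo⟩, ?_⟩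
  · rw [loewnerLE, sub_zero]
    exact hτ_psd.smul (Complex.zero_le_real.mpr (by positivity))
  · rw [hsum]
    exact smul_add_smul_povmResidual hε0

/-- the residual operator `τ_res` completes Bob's approximate
measurement to a POVM on the range of `Pᵀ`. -/
theorem remote_preparation_approximate_povm
    (D : ℕ) (hD : 1 ≤ D)
    (κ : Type*) [Fintype κ] [DecidableEq κ]
    (x : κ → (Fin D → ℂ)) (hx : ∀ a b, star (x a) ⬝ᵥ x b = (if a = b then (1 : ℂ) else 0))
    (lam : κ → ℝ) (hlam : ∀ a, 0 < lam a)
    (ρ₀ : Matrix (Fin D) (Fin D) ℂ) (hρ₀ : ρ₀ = ∑ a, (lam a : ℂ) • ketbra (x a))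
    (P : Matrix (Fin D) (Fin D) ℂ) (hP : P = ∑ a, ketbra (x a))
    (c : ℂ) (hc : c ≠ 0)
    (L : Matrix (Fin D) (Fin D) ℂ)
    (hL : L = (∑ a, ((Real.sqrt (lam a) : ℝ) : ℂ) • (ketbra (x a))ᵀ) + c • (1 - P)ᵀ)
    (ε : ℝ) (hε0 : 0 < ε) (hε1 : ε < 1)
    -- ρ_V = Σ_φ p_φ M_φ is a convex combination of PSD matrices
    (Φ : Type*) [Fintype Φ]
    (M : Φ → Matrix (Fin D) (Fin D) ℂ) (hM : ∀ φ, (M φ).PosSemidef)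
    (p : Φ → ℝ) (hp : ∀ φ, 0 ≤ p φ) (hpsum : ∑ φ, p φ = 1)
    (ρV : Matrix (Fin D) (Fin D) ℂ) (hρV : ρV = ∑ φ, (p φ : ℂ) • M φ)
    (hρVpsd : ρV.PosSemidef)
    -- Loewner sandwich (1−ε)ρ₀ ≤ ρ_V ≤ (1+ε)ρ₀
    (hlo : loewnerLE (((1 - ε : ℝ) : ℂ) • ρ₀) ρV)
    (hhi : loewnerLE ρV (((1 + ε : ℝ) : ℂ) • ρ₀))
    -- τ_res = ((1+ε)/ε)Pᵀ − (1/ε)(L⁻¹)† ρ_Vᵀ L⁻¹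
    (τres : Matrix (Fin D) (Fin D) ℂ)
    (hτ : τres = (((1 + ε) / ε : ℝ) : ℂ) • Pᵀ -
      ((ε⁻¹ : ℝ) : ℂ) • ((L⁻¹)ᴴ * ρVᵀ * L⁻¹)) :
    τres.PosSemidef ∧
    (loewnerLE 0 (((ε / (1 + ε) : ℝ) : ℂ) • τres) ∧
      loewnerLE (((ε / (1 + ε) : ℝ) : ℂ) • τres) (((2 * ε / (1 + ε) : ℝ) : ℂ) • Pᵀ)) ∧
    (∑ φ, (((1 - ε / (1 + ε)) * p φ : ℝ) : ℂ) • ((L⁻¹)ᴴ * (M φ)ᵀ * L⁻¹)) +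
      (((ε / (1 + ε) : ℝ) : ℂ) • τres) = Pᵀ :=
  remote_preparation_approximate_povm_general D κ x hx lam hlam ρ₀ hρ₀ P hP c hc L hL ε hε0 Φ M p ρV
    hρV hlo hhi τres hτ
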